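/- arXiv:2603.14696 — 4 statements merged into one kernel-verified Lean document; each statement's English description precedes it below -/
import Mathlib

section
/- Let 0 < δ ≤ t* and u* > 0, and let E, F : [δ,t*] × [0,u*] → ℝ be smooth non-negative functions such that E(t,u') ≤ E(t,u) whenever 0 ≤ u' ≤ u ≤ u*, and F(t',u) ≤ F(t,u) whenever δ ≤ t' ≤ t ≤ t*. Assume there exist positive constants A, B, C such that for all (t,u) ∈ [δ,t*] × [0,u*] one has E(t,u) + F(t,u) ≤ A·t² + B·∫₀ᵘ F(t,u') du' + C·∫_δ^t E(t',u)/t' dt'. If e^{B·u*}·C ≤ 1, then for all (t,u) ∈ [δ,t*] × [0,u*], E(t,u) + F(t,u) ≤ 3A·e^{B·u}·t². -/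
open MeasureTheory intervalIntegral Set

set_option maxHeartbeats 1000000 in
/-- **Refined Gronwall-type inequality** (Luo–Yu / Lemma 5.1 of the paper).
If the smooth non-negative functions `E`, `F` on `[δ, t*] × [0, u*]` are monotone in the
indicated variables and satisfy the integral inequality
`E(t,u) + F(t,u) ≤ A t² + B ∫₀ᵘ F(t,u') du' + C ∫_δ^t E(t',u)/t' dt'`,
and `e^{B u*} C ≤ 1`, then `E(t,u) + F(t,u) ≤ 3 A e^{B u} t²`. -/
theorem stmt_0
    (δ tStar uStar : ℝ) (hδ : 0 < δ) (hδt : δ ≤ tStar) (hu : 0 < uStar)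
    (E F : ℝ → ℝ → ℝ)
    (hEsmooth : ContDiffOn ℝ (⊤ : ℕ∞) (fun p : ℝ × ℝ => E p.1 p.2)
      (Icc δ tStar ×ˢ Icc (0 : ℝ) uStar))
    (hFsmooth : ContDiffOn ℝ (⊤ : ℕ∞) (fun p : ℝ × ℝ => F p.1 p.2)
      (Icc δ tStar ×ˢ Icc (0 : ℝ) uStar))
    (hEnonneg : ∀ t ∈ Icc δ tStar, ∀ u ∈ Icc (0 : ℝ) uStar, 0 ≤ E t u)
    (hFnonneg : ∀ t ∈ Icc δ tStar, ∀ u ∈ Icc (0 : ℝ) uStar, 0 ≤ F t u)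
    (hEmono : ∀ t ∈ Icc δ tStar, ∀ u' u : ℝ, 0 ≤ u' → u' ≤ u → u ≤ uStar → E t u' ≤ E t u)
    (hFmono : ∀ u ∈ Icc (0 : ℝ) uStar, ∀ t' t : ℝ, δ ≤ t' → t' ≤ t → t ≤ tStar → F t' u ≤ F t u)
    (A B C : ℝ) (hA : 0 < A) (hB : 0 < B) (hC : 0 < C)
    (hmain : ∀ t ∈ Icc δ tStar, ∀ u ∈ Icc (0 : ℝ) uStar,
      E t u + F t u
        ≤ A * t ^ 2 + B * (∫ u' in (0 : ℝ)..u, F t u')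
          + C * (∫ t' in δ..t, E t' u / t'))
    (hsmall : Real.exp (B * uStar) * C ≤ 1) :
    ∀ t ∈ Icc δ tStar, ∀ u ∈ Icc (0 : ℝ) uStar,
      E t u + F t u ≤ 3 * A * Real.exp (B * u) * t ^ 2 := by
  have hKc : IsCompact (Icc δ tStar ×ˢ Icc (0:ℝ) uStar) := isCompact_Icc.prod isCompact_Icc
  have hKne : (Icc δ tStar ×ˢ Icc (0:ℝ) uStar).Nonempty :=
    ⟨(δ, 0), ⟨⟨le_refl _, hδt⟩, ⟨le_refl _, hu.le⟩⟩⟩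
  have hd : ∀ t ∈ Icc δ tStar, ∀ u : ℝ, 0 < Real.exp (B * u) * t ^ 2 := by
    intro t ht u
    have : 0 < t := hδ.trans_le ht.1
    positivity
  have hcont : ContinuousOn (fun p : ℝ × ℝ =>
      (E p.1 p.2 + F p.1 p.2) / (Real.exp (B * p.2) * p.1 ^ 2))
      (Icc δ tStar ×ˢ Icc (0:ℝ) uStar) := by
    apply ContinuousOn.div
    · exact hEsmooth.continuousOn.add hFsmooth.continuousOn
    · exact (Continuous.mul (Real.continuous_exp.comp (continuous_const.mul continuous_snd))
        (continuous_fst.pow 2)).continuousOn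
    · intro p hp
      exact ne_of_gt (hd p.1 hp.1 p.2)
  obtain ⟨p₀, hp₀, hmax⟩ := hKc.exists_isMaxOn hKne hcont
  set t₀ := p₀.1 with ht₀def
  set u₀ := p₀.2 with hu₀def
  have ht₀ : t₀ ∈ Icc δ tStar := hp₀.1
  have hu₀ : u₀ ∈ Icc (0:ℝ) uStar := hp₀.2
  set M := (E t₀ u₀ + F t₀ u₀) / (Real.exp (B * u₀) * t₀ ^ 2) with hMdef
  have hbound : ∀ t ∈ Icc δ tStar, ∀ u ∈ Icc (0:ℝ) uStar,
      E t u + F t u ≤ M * (Real.exp (B * u) * t ^ 2) := by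
    intro t ht u hu'
    have h := hmax (Set.mk_mem_prod ht hu' : ((t,u):ℝ×ℝ) ∈ _)
    have hden := hd t ht u
    rw [Set.mem_setOf_eq] at h
    calc E t u + F t u
        = ((E t u + F t u) / (Real.exp (B * u) * t ^ 2)) * (Real.exp (B * u) * t ^ 2) :=
          (div_mul_cancel₀ _ (ne_of_gt hden)).symm
      _ ≤ M * (Real.exp (B * u) * t ^ 2) := by
          exact mul_le_mul_of_nonneg_right h hden.le
  have hM0 : 0 ≤ M := by
    apply div_nonneg
    · exact add_nonneg (hEnonneg t₀ ht₀ u₀ hu₀) (hFnonneg t₀ ht₀ u₀ hu₀)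
    · exact (hd t₀ ht₀ u₀).le
  have heq : E t₀ u₀ + F t₀ u₀ = M * (Real.exp (B * u₀) * t₀ ^ 2) :=
    (div_mul_cancel₀ _ (ne_of_gt (hd t₀ ht₀ u₀))).symm
  have ht₀pos : 0 < t₀ := hδ.trans_le ht₀.1
  -- bound for the u-integral
  have hFcont : ContinuousOn (fun u' => F t₀ u') (Icc 0 u₀) :=
    hFsmooth.continuousOn.comp ((continuous_const.prodMk continuous_id).continuousOn)
      (fun x hx => Set.mk_mem_prod ht₀ ⟨hx.1, hx.2.trans hu₀.2⟩)
  have hint1 : IntervalIntegrable (fun u' => F t₀ u') volume 0 u₀ := by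
    apply ContinuousOn.intervalIntegrable
    rwa [Set.uIcc_of_le hu₀.1]
  have hint2 : IntervalIntegrable (fun u' => M * Real.exp (B * u') * t₀ ^ 2) volume 0 u₀ :=
    Continuous.intervalIntegrable
      (((continuous_const.mul (Real.continuous_exp.comp (continuous_const.mul continuous_id))).mul
        continuous_const)) 0 u₀
  have hIu : (∫ u' in (0:ℝ)..u₀, F t₀ u')
      ≤ ∫ u' in (0:ℝ)..u₀, M * Real.exp (B * u') * t₀ ^ 2 := by
    apply intervalIntegral.integral_mono_on hu₀.1 hint1 hint2
    intro x hx
    have hx' : x ∈ Icc (0:ℝ) uStar := ⟨hx.1, hx.2.trans hu₀.2⟩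
    have h1 := hbound t₀ ht₀ x hx'
    have h2 := hEnonneg t₀ ht₀ x hx'
    calc F t₀ x ≤ E t₀ x + F t₀ x := by linarith
      _ ≤ M * (Real.exp (B * x) * t₀ ^ 2) := h1
      _ = M * Real.exp (B * x) * t₀ ^ 2 := by ring
  have hIuval : (∫ u' in (0:ℝ)..u₀, M * Real.exp (B * u') * t₀ ^ 2)
      = M * t₀ ^ 2 * ((Real.exp (B * u₀) - 1) / B) := by
    have : (∫ u' in (0:ℝ)..u₀, M * Real.exp (B * u') * t₀ ^ 2)
        = (M * t₀ ^ 2) * ∫ u' in (0:ℝ)..u₀, Real.exp (B * u') := by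
      rw [← intervalIntegral.integral_const_mul]
      congr 1; ext u'; ring
    rw [this, intervalIntegral.integral_comp_mul_left (fun x => Real.exp x) (ne_of_gt hB)]
    simp only [mul_zero, integral_exp, Real.exp_zero, smul_eq_mul]
    field_simp
  -- bound for the t-integral
  have hEcont : ContinuousOn (fun t' => E t' u₀ / t') (Icc δ t₀) := by
    apply ContinuousOn.div
    · exact hEsmooth.continuousOn.comp ((continuous_id.prodMk continuous_const).continuousOn)
        (fun x hx => Set.mk_mem_prod ⟨hx.1, hx.2.trans ht₀.2⟩ hu₀)
    · exact continuousOn_id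
    · intro x hx
      exact ne_of_gt (hδ.trans_le hx.1)
  have hint3 : IntervalIntegrable (fun t' => E t' u₀ / t') volume δ t₀ := by
    apply ContinuousOn.intervalIntegrable
    rwa [Set.uIcc_of_le ht₀.1]
  have hint4 : IntervalIntegrable (fun t' => M * Real.exp (B * u₀) * t') volume δ t₀ :=
    Continuous.intervalIntegrable (continuous_const.mul continuous_id) δ t₀
  have hIt : (∫ t' in δ..t₀, E t' u₀ / t')
      ≤ ∫ t' in δ..t₀, M * Real.exp (B * u₀) * t' := by
    apply intervalIntegral.integral_mono_on ht₀.1 hint3 hint4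
    intro x hx
    have hx' : x ∈ Icc δ tStar := ⟨hx.1, hx.2.trans ht₀.2⟩
    have hxpos : 0 < x := hδ.trans_le hx.1
    have h1 := hbound x hx' u₀ hu₀
    have h2 := hFnonneg x hx' u₀ hu₀
    rw [div_le_iff₀ hxpos]
    nlinarith [h1, h2]
  have hItval : (∫ t' in δ..t₀, M * Real.exp (B * u₀) * t')
      = M * Real.exp (B * u₀) * ((t₀ ^ 2 - δ ^ 2) / 2) := by
    rw [intervalIntegral.integral_const_mul, integral_id]
  -- put it together at the maximum point
  have hkey := hmain t₀ ht₀ u₀ hu₀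
  rw [heq] at hkey
  have hkey2 : M * (Real.exp (B * u₀) * t₀ ^ 2)
      ≤ A * t₀ ^ 2 + B * (M * t₀ ^ 2 * ((Real.exp (B * u₀) - 1) / B))
        + C * (M * Real.exp (B * u₀) * ((t₀ ^ 2 - δ ^ 2) / 2)) := by
    calc M * (Real.exp (B * u₀) * t₀ ^ 2)
        ≤ A * t₀ ^ 2 + B * (∫ u' in (0:ℝ)..u₀, F t₀ u')
          + C * (∫ t' in δ..t₀, E t' u₀ / t') := hkey
      _ ≤ _ := by
          gcongr
          · rw [← hIuval]; exact hIu
          · rw [← hItval]; exact hIt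
  have he1 : (1:ℝ) ≤ Real.exp (B * u₀) := by
    rw [← Real.exp_zero]
    exact Real.exp_le_exp.mpr (mul_nonneg hB.le hu₀.1)
  have hCe : C * Real.exp (B * u₀) ≤ 1 := by
    have h1 : Real.exp (B * u₀) ≤ Real.exp (B * uStar) :=
      Real.exp_le_exp.mpr (by nlinarith [hu₀.2])
    nlinarith
  have hδsq : 0 < δ ^ 2 := by positivity
  have ht₀sq : 0 < t₀ ^ 2 := by positivity
  have hMle : M ≤ 2 * A := by
    have hB' : B ≠ 0 := ne_of_gt hB
    have hkey3 : M * Real.exp (B * u₀) * t₀ ^ 2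
        ≤ A * t₀ ^ 2 + M * t₀ ^ 2 * (Real.exp (B * u₀) - 1)
          + C * Real.exp (B * u₀) * (M * ((t₀ ^ 2 - δ ^ 2) / 2)) := by
      have : B * (M * t₀ ^ 2 * ((Real.exp (B * u₀) - 1) / B))
          = M * t₀ ^ 2 * (Real.exp (B * u₀) - 1) := by field_simp
      nlinarith [hkey2]
    -- C * exp ≤ 1, M ≥ 0, t₀² - δ² ≥ 0 pieces
    have hCM : C * Real.exp (B * u₀) * (M * ((t₀ ^ 2 - δ ^ 2) / 2))
        ≤ M * t₀ ^ 2 / 2 := by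
      have hδt₀ : δ ^ 2 ≤ t₀ ^ 2 := by nlinarith [ht₀.1]
      nlinarith [hCe, mul_nonneg hM0 (sub_nonneg.mpr hδt₀), mul_nonneg hM0 hδsq.le]
    nlinarith [hkey3, hCM, ht₀sq]
  intro t ht u hu'
  have h1 := hbound t ht u hu'
  have hetu : 0 < Real.exp (B * u) * t ^ 2 := hd t ht u
  nlinarith [h1, hetu, hMle, hA]
end

section
/- Let γ > 1 and let v¹, v², c : O → ℝ be C¹ functions on an open set O ⊆ ℝ³ (coordinates (t,x₁,x₂)) with c > 0, satisfying the polytropic Euler momentum equations ∂_t vⁱ + v¹∂₁vⁱ + v²∂₂vⁱ = -(2c/(γ-1))·∂ᵢc for i = 1,2. Then at every point of O, the vorticity satisfies ∂₁v² - ∂₂v¹ = X̂¹·X̂(v²) - X̂²·X̂(v¹) + (2/(γ-1))·X̂(c) + c⁻¹·X̂¹·L(v¹) + c⁻¹·X̂²·L(v²). -/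
/-- `∂_t` of a function on `ℝ³ = ℝ × ℝ × ℝ` with coordinates `(t, x₁, x₂)`. -/
noncomputable def pdt (f : ℝ × ℝ × ℝ → ℝ) (x : ℝ × ℝ × ℝ) : ℝ := fderiv ℝ f x (1, 0, 0)

/-- `∂₁` of a function on `ℝ³`. -/
noncomputable def pd1 (f : ℝ × ℝ × ℝ → ℝ) (x : ℝ × ℝ × ℝ) : ℝ := fderiv ℝ f x (0, 1, 0)

/-- `∂₂` of a function on `ℝ³`. -/
noncomputable def pd2 (f : ℝ × ℝ × ℝ → ℝ) (x : ℝ × ℝ × ℝ) : ℝ := fderiv ℝ f x (0, 0, 1)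

/-- `X̂`-derivative: `X̂ f = X̂¹ ∂₁ f + X̂² ∂₂ f`. -/
noncomputable def Xd (X1 X2 f : ℝ × ℝ × ℝ → ℝ) (x : ℝ × ℝ × ℝ) : ℝ :=
  X1 x * pd1 f x + X2 x * pd2 f x

/-- `T̂`-derivative, where `T̂¹ = -X̂²` and `T̂² = X̂¹`. -/
noncomputable def Td (X1 X2 f : ℝ × ℝ × ℝ → ℝ) (x : ℝ × ℝ × ℝ) : ℝ :=
  (-X2 x) * pd1 f x + X1 x * pd2 f x

/-- Material derivative `B f = ∂_t f + v¹ ∂₁ f + v² ∂₂ f`. -/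
noncomputable def Bd (v1 v2 f : ℝ × ℝ × ℝ → ℝ) (x : ℝ × ℝ × ℝ) : ℝ :=
  pdt f x + v1 x * pd1 f x + v2 x * pd2 f x

/-- Null derivative `L f = B f - c T̂ f`. -/
noncomputable def Ld (v1 v2 c X1 X2 f : ℝ × ℝ × ℝ → ℝ) (x : ℝ × ℝ × ℝ) : ℝ :=
  Bd v1 v2 f x - c x * Td X1 X2 f x

/-
Since `(X̂, T̂)` is an orthonormal frame of the `x`-plane, `∂ᵢ = X̂ⁱ X̂ + T̂ⁱ T̂`, which splits the
vorticity into an `X̂`-part and the `T̂`-part `-(X̂¹ T̂v¹ + X̂² T̂v²)`. Writing `c T̂ = B - L` and using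
the momentum equations `Bvⁱ = -(2c/(γ-1)) ∂ᵢc`, the `T̂`-part becomes
`c⁻¹ (X̂¹ Lv¹ + X̂² Lv²) + (2/(γ-1)) X̂c`.
-/

section NullFrame

variable (X1 X2 : ℝ × ℝ × ℝ → ℝ) (x : ℝ × ℝ × ℝ)

theorem pd1_eq_null_frame (hX : X1 x ^ 2 + X2 x ^ 2 = 1) (f : ℝ × ℝ × ℝ → ℝ) :
    pd1 f x = X1 x * Xd X1 X2 f x - X2 x * Td X1 X2 f x := by
  simp only [Xd, Td]
  linear_combination (-pd1 f x) * hX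

theorem pd2_eq_null_frame (hX : X1 x ^ 2 + X2 x ^ 2 = 1) (f : ℝ × ℝ × ℝ → ℝ) :
    pd2 f x = X2 x * Xd X1 X2 f x + X1 x * Td X1 X2 f x := by
  simp only [Xd, Td]
  linear_combination (-pd2 f x) * hX

theorem vorticity_eq_null_frame (hX : X1 x ^ 2 + X2 x ^ 2 = 1) (v1 v2 : ℝ × ℝ × ℝ → ℝ) :
    pd1 v2 x - pd2 v1 x
      = X1 x * Xd X1 X2 v2 x - X2 x * Xd X1 X2 v1 x
        - (X1 x * Td X1 X2 v1 x + X2 x * Td X1 X2 v2 x) := by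
  rw [pd1_eq_null_frame X1 X2 x hX, pd2_eq_null_frame X1 X2 x hX]
  ring

theorem Td_eq_inv_mul_Bd_sub_Ld (v1 v2 c f : ℝ × ℝ × ℝ → ℝ) (hc : c x ≠ 0) :
    Td X1 X2 f x = (c x)⁻¹ * (Bd v1 v2 f x - Ld v1 v2 c X1 X2 f x) := by
  rw [Ld, sub_sub_cancel, inv_mul_cancel_left₀ hc]

end NullFrame

theorem stmt_1_general (γ : ℝ) (hγ : 1 < γ)
    (O : Set (ℝ × ℝ × ℝ))
    (v1 v2 c : ℝ × ℝ × ℝ → ℝ)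
    (hcpos : ∀ x ∈ O, 0 < c x)
    (X1 X2 : ℝ × ℝ × ℝ → ℝ) (hX : ∀ x ∈ O, X1 x ^ 2 + X2 x ^ 2 = 1)
    (heuler1 : ∀ x ∈ O, Bd v1 v2 v1 x = -(2 * c x / (γ - 1)) * pd1 c x)
    (heuler2 : ∀ x ∈ O, Bd v1 v2 v2 x = -(2 * c x / (γ - 1)) * pd2 c x) :
    ∀ x ∈ O,
      pd1 v2 x - pd2 v1 x
        = X1 x * Xd X1 X2 v2 x - X2 x * Xd X1 X2 v1 x
          + 2 / (γ - 1) * Xd X1 X2 c x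
          + (c x)⁻¹ * X1 x * Ld v1 v2 c X1 X2 v1 x
          + (c x)⁻¹ * X2 x * Ld v1 v2 c X1 X2 v2 x := by
  intro x hx
  have hc : c x ≠ 0 := (hcpos x hx).ne'
  have hγ₁ : γ - 1 ≠ 0 := sub_ne_zero.mpr hγ.ne'
  rw [vorticity_eq_null_frame X1 X2 x (hX x hx), Td_eq_inv_mul_Bd_sub_Ld X1 X2 x v1 v2 c v1 hc,
    Td_eq_inv_mul_Bd_sub_Ld X1 X2 x v1 v2 c v2 hc, heuler1 x hx, heuler2 x hx]
  simp only [Xd]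
  field_simp
  ring

/-- **Reformulation of the vorticity in the first null frame**: for `C¹` solutions of the
polytropic Euler momentum equations, `∂₁v² - ∂₂v¹ = X̂¹ X̂(v²) - X̂² X̂(v¹) + (2/(γ-1)) X̂(c)
+ c⁻¹ X̂¹ L(v¹) + c⁻¹ X̂² L(v²)`. -/
theorem stmt_1 (γ : ℝ) (hγ : 1 < γ)
    (O : Set (ℝ × ℝ × ℝ)) (hO : IsOpen O)
    (v1 v2 c : ℝ × ℝ × ℝ → ℝ)
    (hv1 : ContDiffOn ℝ 1 v1 O) (hv2 : ContDiffOn ℝ 1 v2 O) (hc : ContDiffOn ℝ 1 c O)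
    (hcpos : ∀ x ∈ O, 0 < c x)
    (X1 X2 : ℝ × ℝ × ℝ → ℝ) (hX : ∀ x ∈ O, X1 x ^ 2 + X2 x ^ 2 = 1)
    (heuler1 : ∀ x ∈ O, Bd v1 v2 v1 x = -(2 * c x / (γ - 1)) * pd1 c x)
    (heuler2 : ∀ x ∈ O, Bd v1 v2 v2 x = -(2 * c x / (γ - 1)) * pd2 c x) :
    ∀ x ∈ O,
      pd1 v2 x - pd2 v1 x
        = X1 x * Xd X1 X2 v2 x - X2 x * Xd X1 X2 v1 x
          + 2 / (γ - 1) * Xd X1 X2 c x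
          + (c x)⁻¹ * X1 x * Ld v1 v2 c X1 X2 v1 x
          + (c x)⁻¹ * X2 x * Ld v1 v2 c X1 X2 v2 x :=
  stmt_1_general γ hγ O v1 v2 c hcpos X1 X2 hX heuler1 heuler2
end

section
/- Let γ > 1, k₀ > 0, and let ρ, v¹, v² be C¹ functions on an open set O ⊆ ℝ³ (coordinates (t,x₁,x₂)) with ρ > 0, solving ∂_tρ + ∂₁(ρv¹) + ∂₂(ρv²) = 0 and ∂_t vⁱ + v¹∂₁vⁱ + v²∂₂vⁱ = -(2c/(γ-1))·∂ᵢc for i = 1,2, where c := √(k₀γ)·ρ^{(γ-1)/2}. Define the second null frame derivatives L̊f := ∂_t f + (v¹+c)∂₁f + v²∂₂f, T̂̊f := -∂₁f, X̊f := ∂₂f. With w̲ := c/(γ-1) + v¹/2, w := c/(γ-1) - v¹/2, ψ₂ := -v², the following diagonal system holds at every point of O: L̊(w̲) = (1/2)c·X̊(ψ₂); L̊(w) = -2c·T̂̊(w) + (1/2)c·X̊(ψ₂); and L̊(ψ₂) = -c·T̂̊(ψ₂) + c·X̊(w+w̲). -/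
/-- Sound speed `c = √(k₀γ) ρ^{(γ-1)/2}` of the polytropic gas. -/
noncomputable def cs (γ k₀ : ℝ) (ρ : ℝ × ℝ × ℝ → ℝ) (x : ℝ × ℝ × ℝ) : ℝ :=
  Real.sqrt (k₀ * γ) * ρ x ^ ((γ - 1) / 2)

/-- Second null frame derivative `L̊ f = ∂_t f + (v¹+c) ∂₁ f + v² ∂₂ f`. -/
noncomputable def Lring (γ k₀ : ℝ) (ρ v1 v2 f : ℝ × ℝ × ℝ → ℝ) (x : ℝ × ℝ × ℝ) : ℝ :=
  pdt f x + (v1 x + cs γ k₀ ρ x) * pd1 f x + v2 x * pd2 f x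

/-- Second null frame derivative `T̂̊ f = -∂₁ f`. -/
noncomputable def Thring (f : ℝ × ℝ × ℝ → ℝ) (x : ℝ × ℝ × ℝ) : ℝ := -pd1 f x

/-- Second null frame derivative `X̊ f = ∂₂ f`. -/
noncomputable def Xring (f : ℝ × ℝ × ℝ → ℝ) (x : ℝ × ℝ × ℝ) : ℝ := pd2 f x

/-! Write `L̊ = B + c ∂₁`, with `B` the material derivative. The continuity equation says
`Bρ = -ρ div v`, and as `c` is a multiple of `ρ^((γ-1)/2)` the chain rule turns it into
`Bc = -((γ-1)/2) c div v`. Each identity is then a linear combination of this equation with the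
momentum equations: in `L̊(c/(γ-1) ± v¹/2)` the term `± Bv¹/2 = ∓ (c/(γ-1)) ∂₁c` cancels
`c ∂₁(c/(γ-1))` for `w̲` and doubles it for `w`, while `L̊ψ₂ = -Bv² - c ∂₁v²`. -/

open ContinuousLinearMap

theorem fderiv_linear_comb_apply {E : Type*} [NormedAddCommGroup E] [NormedSpace ℝ E]
    {f g : E → ℝ} {x : E} (a b : ℝ) (hf : DifferentiableAt ℝ f x)
    (hg : DifferentiableAt ℝ g x) (u : E) :
    fderiv ℝ (fun y => a * f y + b * g y) x u = a * fderiv ℝ f x u + b * fderiv ℝ g x u := by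
  rw [fderiv_fun_add (hf.const_mul a) (hg.const_mul b), fderiv_const_mul hf,
    fderiv_const_mul hg]
  rfl

section Euler

variable {γ k₀ : ℝ} {ρ v1 v2 : ℝ × ℝ × ℝ → ℝ} {x : ℝ × ℝ × ℝ}

theorem Bd_eq_neg_mul_divergence (hρ : DifferentiableAt ℝ ρ x)
    (hv1 : DifferentiableAt ℝ v1 x) (hv2 : DifferentiableAt ℝ v2 x)
    (hcont : pdt ρ x + pd1 (fun y => ρ y * v1 y) x + pd2 (fun y => ρ y * v2 y) x = 0) :
    Bd v1 v2 ρ x = -(ρ x * (pd1 v1 x + pd2 v2 x)) := by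
  simp only [pdt, pd1, pd2, fderiv_fun_mul hρ hv1, fderiv_fun_mul hρ hv2, add_apply, smul_apply,
    smul_eq_mul] at hcont
  unfold Bd pdt pd1 pd2
  linear_combination hcont

theorem hasFDerivAt_cs (hρ : DifferentiableAt ℝ ρ x) (hpos : 0 < ρ x) :
    HasFDerivAt (cs γ k₀ ρ) (((γ - 1) / 2 * cs γ k₀ ρ x / ρ x) • fderiv ℝ ρ x) x := by
  have h := (hρ.hasFDerivAt.rpow_const (p := (γ - 1) / 2) (Or.inl hpos.ne')).const_mul
    (Real.sqrt (k₀ * γ))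
  refine h.congr_fderiv ?_
  rw [smul_smul, Real.rpow_sub_one hpos.ne', cs]
  ring_nf

theorem Bd_cs_of_continuity (hρ : DifferentiableAt ℝ ρ x)
    (hv1 : DifferentiableAt ℝ v1 x) (hv2 : DifferentiableAt ℝ v2 x) (hpos : 0 < ρ x)
    (hcont : pdt ρ x + pd1 (fun y => ρ y * v1 y) x + pd2 (fun y => ρ y * v2 y) x = 0) :
    Bd v1 v2 (cs γ k₀ ρ) x = -((γ - 1) / 2 * cs γ k₀ ρ x * (pd1 v1 x + pd2 v2 x)) := by
  have hBρ := Bd_eq_neg_mul_divergence hρ hv1 hv2 hcont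
  have hBc : Bd v1 v2 (cs γ k₀ ρ) x = (γ - 1) / 2 * cs γ k₀ ρ x / ρ x * Bd v1 v2 ρ x := by
    simp only [Bd, pdt, pd1, pd2, (hasFDerivAt_cs hρ hpos).fderiv, smul_apply, smul_eq_mul]
    ring
  rw [hBc, hBρ]
  field_simp

end Euler

theorem stmt_5_general (γ k₀ : ℝ) (hγ : 1 < γ)
    (O : Set (ℝ × ℝ × ℝ)) (hO : IsOpen O)
    (ρ v1 v2 : ℝ × ℝ × ℝ → ℝ)
    (hρ : ContDiffOn ℝ 1 ρ O) (hv1 : ContDiffOn ℝ 1 v1 O) (hv2 : ContDiffOn ℝ 1 v2 O)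
    (hρpos : ∀ x ∈ O, 0 < ρ x)
    (hcont : ∀ x ∈ O,
      pdt ρ x + pd1 (fun y => ρ y * v1 y) x + pd2 (fun y => ρ y * v2 y) x = 0)
    (hmom1 : ∀ x ∈ O, Bd v1 v2 v1 x = -(2 * cs γ k₀ ρ x / (γ - 1)) * pd1 (cs γ k₀ ρ) x)
    (hmom2 : ∀ x ∈ O, Bd v1 v2 v2 x = -(2 * cs γ k₀ ρ x / (γ - 1)) * pd2 (cs γ k₀ ρ) x)
    (wb w ψ2 : ℝ × ℝ × ℝ → ℝ)
    (hwb : wb = fun x => cs γ k₀ ρ x / (γ - 1) + v1 x / 2)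
    (hw : w = fun x => cs γ k₀ ρ x / (γ - 1) - v1 x / 2)
    (hψ2 : ψ2 = fun x => -v2 x) :
    ∀ x ∈ O,
      (Lring γ k₀ ρ v1 v2 wb x = 1 / 2 * cs γ k₀ ρ x * Xring ψ2 x)
      ∧ (Lring γ k₀ ρ v1 v2 w x
          = -2 * cs γ k₀ ρ x * Thring w x + 1 / 2 * cs γ k₀ ρ x * Xring ψ2 x)
      ∧ (Lring γ k₀ ρ v1 v2 ψ2 x
          = -(cs γ k₀ ρ x) * Thring ψ2 x
            + cs γ k₀ ρ x * Xring (fun y => w y + wb y) x) := by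
  intro x hx
  have hγ1 : γ - 1 ≠ 0 := sub_ne_zero.2 hγ.ne'
  have hdiff {f : ℝ × ℝ × ℝ → ℝ} (hf : ContDiffOn ℝ 1 f O) : DifferentiableAt ℝ f x :=
    (hf.differentiableOn one_ne_zero).differentiableAt (hO.mem_nhds hx)
  have hρd := hdiff hρ
  have hv1d := hdiff hv1
  have hv2d := hdiff hv2
  have hcd : DifferentiableAt ℝ (cs γ k₀ ρ) x :=
    (hasFDerivAt_cs hρd (hρpos x hx)).differentiableAt
  have hBc := Bd_cs_of_continuity (γ := γ) (k₀ := k₀) hρd hv1d hv2d (hρpos x hx) (hcont x hx)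
  have hm1 := hmom1 x hx
  have hm2 := hmom2 x hx
  have hwb' : wb = fun y => (γ - 1)⁻¹ * cs γ k₀ ρ y + 2⁻¹ * v1 y := by
    rw [hwb]; funext y; ring
  have hw' : w = fun y => (γ - 1)⁻¹ * cs γ k₀ ρ y + (-2⁻¹) * v1 y := by
    rw [hw]; funext y; ring
  have hsum : (fun y => w y + wb y) = fun y => 2 / (γ - 1) * cs γ k₀ ρ y := by
    rw [hw, hwb]; funext y; ring
  rw [hsum]
  subst hψ2
  simp only [Lring, Thring, Xring, Bd, pdt, pd1, pd2, hwb', hw', fderiv_fun_neg, neg_apply,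
    fderiv_const_mul hcd, smul_apply, smul_eq_mul, fderiv_linear_comb_apply _ _ hcd hv1d]
    at hBc hm1 hm2 ⊢
  refine ⟨?_, ?_, ?_⟩
  · linear_combination (norm := (field_simp; ring)) (γ - 1)⁻¹ * hBc + 2⁻¹ * hm1
  · linear_combination (norm := (field_simp; ring)) (γ - 1)⁻¹ * hBc - 2⁻¹ * hm1
  · linear_combination (norm := (field_simp; ring)) -hm2

/-- **Euler equations in diagonal form in the second null frame** in terms of the Riemann
invariants `w̲ = c/(γ-1) + v¹/2`, `w = c/(γ-1) - v¹/2`, and `ψ₂ = -v²`. -/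
theorem stmt_5 (γ k₀ : ℝ) (hγ : 1 < γ) (hk : 0 < k₀)
    (O : Set (ℝ × ℝ × ℝ)) (hO : IsOpen O)
    (ρ v1 v2 : ℝ × ℝ × ℝ → ℝ)
    (hρ : ContDiffOn ℝ 1 ρ O) (hv1 : ContDiffOn ℝ 1 v1 O) (hv2 : ContDiffOn ℝ 1 v2 O)
    (hρpos : ∀ x ∈ O, 0 < ρ x)
    (hcont : ∀ x ∈ O,
      pdt ρ x + pd1 (fun y => ρ y * v1 y) x + pd2 (fun y => ρ y * v2 y) x = 0)
    (hmom1 : ∀ x ∈ O, Bd v1 v2 v1 x = -(2 * cs γ k₀ ρ x / (γ - 1)) * pd1 (cs γ k₀ ρ) x)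
    (hmom2 : ∀ x ∈ O, Bd v1 v2 v2 x = -(2 * cs γ k₀ ρ x / (γ - 1)) * pd2 (cs γ k₀ ρ) x)
    (wb w ψ2 : ℝ × ℝ × ℝ → ℝ)
    (hwb : wb = fun x => cs γ k₀ ρ x / (γ - 1) + v1 x / 2)
    (hw : w = fun x => cs γ k₀ ρ x / (γ - 1) - v1 x / 2)
    (hψ2 : ψ2 = fun x => -v2 x) :
    ∀ x ∈ O,
      (Lring γ k₀ ρ v1 v2 wb x = 1 / 2 * cs γ k₀ ρ x * Xring ψ2 x)
      ∧ (Lring γ k₀ ρ v1 v2 w x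
          = -2 * cs γ k₀ ρ x * Thring w x + 1 / 2 * cs γ k₀ ρ x * Xring ψ2 x)
      ∧ (Lring γ k₀ ρ v1 v2 ψ2 x
          = -(cs γ k₀ ρ x) * Thring ψ2 x
            + cs γ k₀ ρ x * Xring (fun y => w y + wb y) x) :=
  stmt_5_general γ k₀ hγ O hO ρ v1 v2 hρ hv1 hv2 hρpos hcont hmom1 hmom2 wb w ψ2 hwb hw hψ2
end

section
/- Let γ > 1, k₀ > 0 and p(ρ) := k₀ρ^γ. Let 0 < ρ_l < ρ_r, let v_l¹ ∈ ℝ, set v_r¹ := v_l¹ - √((ρ_r - ρ_l)·(p(ρ_r) - p(ρ_l))/(ρ_l·ρ_r)), s := (ρ_r v_r¹ - ρ_l v_l¹)/(ρ_r - ρ_l), and sound speeds c_l := √(k₀γ)·ρ_l^{(γ-1)/2}, c_r := √(k₀γ)·ρ_r^{(γ-1)/2}. Then the Lax shock (entropy) inequalities for the first characteristic family hold: v_r¹ - c_r < s < v_l¹ - c_l, and s < v_r¹. -/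
/-!
Write `m` for the chord slope `(p ρ_r - p ρ_l) / (ρ_r - ρ_l)` of the pressure and
`u := √(m / (ρ_l ρ_r))`. Then `v_l - v_r = (ρ_r - ρ_l) u` and the shock speed is
`s = v_l - ρ_r u = v_r - ρ_l u`, so the three Lax inequalities read `ρ_l u < c_r`,
`c_l < ρ_r u` and `0 < ρ_l u`. Since `(ρ_l u)² = (ρ_l / ρ_r) m < m` and `(ρ_r u)² = (ρ_r / ρ_l) m > m`,
it suffices that `c_l² < m < c_r²`. For `p = k₀ ρ^γ` we have `c² = p'(ρ)`, and this is the
strict convexity of `ρ ↦ ρ^γ`: a chord is steeper than the tangent at its left end and less steep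
than the tangent at its right end.
-/

open Real Set

theorem Real.rpow_slope_mem_Ioo {γ a b : ℝ} (hγ : 1 < γ) (ha : 0 < a) (hab : a < b) :
    slope (· ^ γ) a b ∈ Ioo (γ * a ^ (γ - 1)) (γ * b ^ (γ - 1)) := by
  have hconv := strictConvexOn_rpow hγ
  have hderiv {x : ℝ} (hx : 0 < x) := hasDerivAt_rpow_const (p := γ) (Or.inl hx.ne')
  exact ⟨hconv.lt_slope_of_hasDerivAt ha.le (ha.trans hab).le hab (hderiv ha),
    hconv.slope_lt_of_hasDerivAt ha.le (ha.trans hab).le hab (hderiv (ha.trans hab))⟩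

theorem sq_sqrt_mul_rpow_half_sub_one {K γ ρ : ℝ} (hK : 0 ≤ K) (hρ : 0 ≤ ρ) :
    (√K * ρ ^ ((γ - 1) / 2)) ^ 2 = K * ρ ^ (γ - 1) := by
  rw [mul_pow, sq_sqrt hK, ← rpow_natCast, ← rpow_mul hρ]
  norm_num

section LaxShock

variable {p : ℝ → ℝ} {ρl ρr : ℝ}

theorem sqrt_sub_mul_sub_div_eq_mul_sqrt_slope (hlr : ρl < ρr) :
    √((ρr - ρl) * (p ρr - p ρl) / (ρl * ρr)) =
      (ρr - ρl) * √(slope p ρl ρr / (ρl * ρr)) := by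
  have hΔ : ρr - ρl ≠ 0 := (sub_pos.2 hlr).ne'
  have hchord : (ρr - ρl) * (p ρr - p ρl) / (ρl * ρr) =
      (ρr - ρl) ^ 2 * (slope p ρl ρr / (ρl * ρr)) := by
    rw [slope_def_field]; field_simp
  rw [hchord, sqrt_mul (sq_nonneg _), sqrt_sq (sub_pos.2 hlr).le]

theorem lax_one_shock_of_sq_lt_slope_lt_sq {vl vr s cl cr : ℝ} (hρl : 0 < ρl) (hlr : ρl < ρr)
    (hcl : cl ^ 2 < slope p ρl ρr) (hcr : slope p ρl ρr < cr ^ 2) (hcr0 : 0 ≤ cr)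
    (hvr : vr = vl - √((ρr - ρl) * (p ρr - p ρl) / (ρl * ρr)))
    (hs : s = (ρr * vr - ρl * vl) / (ρr - ρl)) :
    vr - cr < s ∧ s < vl - cl ∧ s < vr := by
  have hρr : 0 < ρr := hρl.trans hlr
  have hm : 0 < slope p ρl ρr := (sq_nonneg cl).trans_lt hcl
  rw [sqrt_sub_mul_sub_div_eq_mul_sqrt_slope hlr] at hvr
  set u := √(slope p ρl ρr / (ρl * ρr))
  have hu : 0 < u := sqrt_pos.2 (by positivity)
  have hu2 : u ^ 2 = slope p ρl ρr / (ρl * ρr) := sq_sqrt (by positivity)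
  have hsr : s = vr - ρl * u := by
    rw [hs, hvr]; field_simp [(sub_pos.2 hlr).ne']; ring
  have hsl : s = vl - ρr * u := by rw [hsr, hvr]; ring
  have hcr' : ρl * u < cr := by
    refine lt_of_pow_lt_pow_left₀ 2 hcr0 (lt_trans ?_ hcr)
    calc (ρl * u) ^ 2 = ρl / ρr * slope p ρl ρr := by rw [mul_pow, hu2]; field_simp
      _ < slope p ρl ρr := mul_lt_of_lt_one_left hm ((div_lt_one hρr).2 hlr)
  have hcl' : cl < ρr * u := by
    refine lt_of_pow_lt_pow_left₀ 2 (by positivity) (hcl.trans ?_)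
    calc slope p ρl ρr < ρr / ρl * slope p ρl ρr :=
          lt_mul_of_one_lt_left hm ((one_lt_div hρl).2 hlr)
      _ = (ρr * u) ^ 2 := by rw [mul_pow, hu2]; field_simp
  exact ⟨by linarith, by linarith, by nlinarith⟩

end LaxShock

/-- **Lax shock (entropy) inequalities for a 1-shock** of the 2-D isentropic Euler system under
1-D symmetry: with `ρ_l < ρ_r`, `v_r¹ = v_l¹ - √((ρ_r-ρ_l)(p(ρ_r)-p(ρ_l))/(ρ_lρ_r))`,
`s = (ρ_r v_r¹ - ρ_l v_l¹)/(ρ_r - ρ_l)` and sound speeds `c_• = √(k₀γ) ρ_•^{(γ-1)/2}`, one has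
`v_r¹ - c_r < s < v_l¹ - c_l` and `s < v_r¹`. -/
theorem stmt_8 (γ k₀ : ℝ) (hγ : 1 < γ) (hk : 0 < k₀)
    (ρl ρr vl1 : ℝ) (hρl : 0 < ρl) (hlr : ρl < ρr)
    (vr1 : ℝ)
    (hvr1 : vr1 = vl1 -
      Real.sqrt ((ρr - ρl) * (k₀ * ρr ^ γ - k₀ * ρl ^ γ) / (ρl * ρr)))
    (s : ℝ) (hs : s = (ρr * vr1 - ρl * vl1) / (ρr - ρl))
    (cl cr : ℝ)
    (hcl : cl = Real.sqrt (k₀ * γ) * ρl ^ ((γ - 1) / 2))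
    (hcr : cr = Real.sqrt (k₀ * γ) * ρr ^ ((γ - 1) / 2)) :
    vr1 - cr < s ∧ s < vl1 - cl ∧ s < vr1 := by
  have hρr : 0 < ρr := hρl.trans hlr
  have hkγ : 0 ≤ k₀ * γ := by positivity
  have hslope : slope (fun ρ ↦ k₀ * ρ ^ γ) ρl ρr = k₀ * slope (· ^ γ) ρl ρr := by
    simp only [slope_def_field, ← mul_sub, mul_div_assoc]
  obtain ⟨hlower, hupper⟩ := Real.rpow_slope_mem_Ioo hγ hρl hlr
  refine lax_one_shock_of_sq_lt_slope_lt_sq (p := fun ρ ↦ k₀ * ρ ^ γ) hρl hlr ?_ ?_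
    (by rw [hcr]; positivity) hvr1 hs
  · rw [hcl, sq_sqrt_mul_rpow_half_sub_one hkγ hρl.le, hslope, mul_assoc]
    exact mul_lt_mul_of_pos_left hlower hk
  · rw [hcr, sq_sqrt_mul_rpow_half_sub_one hkγ hρr.le, hslope, mul_assoc]
    exact mul_lt_mul_of_pos_left hupper hk
end
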